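/- arXiv:2008.05529 — 2 statements merged into one kernel-verified Lean document; each statement's English description precedes it below -/
import Mathlib

section
/- Let M be a graded multiplication R-module and N a graded s-prime submodule of M for some nonzero homogeneous s. If K and L are graded submodules of M with K ∩ L ⊆ N, then sK ⊆ N or sL ⊆ N. -/
open DirectSum

variable {G R M : Type*}

/-- A submodule is graded if it contains all homogeneous components of its elements. -/
def IsGradedSubmodule [CommRing R] [AddCommGroup M] [Module R M] [DecidableEq G]
    (ℳ : G → AddSubgroup M) [DirectSum.Decomposition ℳ] (N : Submodule R M) : Prop :=
  ∀ m ∈ N, ∀ g : G, (DirectSum.decompose ℳ m g : M) ∈ N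

/-- A graded ideal of a graded ring. -/
def IsGradedIdeal [CommRing R] [DecidableEq G]
    (𝒜 : G → AddSubgroup R) [DirectSum.Decomposition 𝒜] (P : Ideal R) : Prop :=
  ∀ r ∈ P, ∀ g : G, (DirectSum.decompose 𝒜 r g : R) ∈ P

/-- `N` is a graded `s`-prime submodule: `s ∉ (N :_R M)` and for homogeneous `r`, `m`,
`r • m ∈ N` implies `s * r ∈ (N :_R M)` or `s • m ∈ N`. -/
def IsGradedSPrime [CommRing R] [AddCommGroup M] [Module R M]
    (𝒜 : G → AddSubgroup R) (ℳ : G → AddSubgroup M) (s : R) (N : Submodule R M) : Prop :=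
  s ∉ N.colon ⊤ ∧
  ∀ (r : R) (m : M), SetLike.IsHomogeneousElem 𝒜 r → SetLike.IsHomogeneousElem ℳ m →
    r • m ∈ N → s * r ∈ N.colon ⊤ ∨ s • m ∈ N

/-- `P` is a graded `s`-prime ideal. -/
def IsGradedSPrimeIdeal [CommRing R]
    (𝒜 : G → AddSubgroup R) (s : R) (P : Ideal R) : Prop :=
  s ∉ P ∧
  ∀ a b : R, SetLike.IsHomogeneousElem 𝒜 a → SetLike.IsHomogeneousElem 𝒜 b →
    a * b ∈ P → s * a ∈ P ∨ s * b ∈ P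

/-- `K` is a graded prime submodule. -/
def IsGradedPrime [CommRing R] [AddCommGroup M] [Module R M]
    (𝒜 : G → AddSubgroup R) (ℳ : G → AddSubgroup M) (K : Submodule R M) : Prop :=
  K ≠ ⊤ ∧
  ∀ (r : R) (m : M), SetLike.IsHomogeneousElem 𝒜 r → SetLike.IsHomogeneousElem ℳ m →
    r • m ∈ K → r ∈ K.colon ⊤ ∨ m ∈ K

/-! If `s • k ∉ N` for some `k ∈ K`, then writing `K = (K :_R M) M` shows that `s * a ∉ (N :_R M)`
for some `a ∈ (K :_R M)`, which may be taken homogeneous because `(K :_R M)` is a graded ideal;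
likewise some homogeneous `b ∈ (L :_R M)` has `s * b ∉ (N :_R M)`. But `a * b ∈ (N :_R M)` since
`a • b • M ⊆ K ⊓ L ⊆ N`, and `(N :_R M)` is a graded `s`-prime ideal. -/

theorem Submodule.smul_mem_of_forall_mul_mem_colon [CommRing R] [AddCommGroup M] [Module R M]
    {I : Ideal R} {N : Submodule R M} {s : R} (h : ∀ a ∈ I, s * a ∈ N.colon ⊤) {k : M}
    (hk : k ∈ I • (⊤ : Submodule R M)) : s • k ∈ N := by
  have hle : I • (⊤ : Submodule R M) ≤ N.comap (s • LinearMap.id) :=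
    Submodule.smul_le.2 fun a ha m _ => by
      rw [Submodule.mem_comap, LinearMap.smul_apply, LinearMap.id_apply, smul_smul]
      exact Submodule.mem_colon.1 (h a ha) m trivial
  exact hle hk

theorem Submodule.mul_mem_colon_of_inf_le [CommRing R] [AddCommGroup M] [Module R M]
    {K L N : Submodule R M} (hKL : K ⊓ L ≤ N) {a b : R} (ha : a ∈ K.colon ⊤)
    (hb : b ∈ L.colon ⊤) : a * b ∈ N.colon ⊤ :=
  Submodule.colon_mono hKL subset_rfl <| by
    rw [Submodule.inf_colon]
    exact ⟨Ideal.mul_mem_right b _ ha, Ideal.mul_mem_left _ a hb⟩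

section Graded

variable [DecidableEq G] [CommRing R] [AddCommGroup M] [Module R M]
    (𝒜 : G → AddSubgroup R) (ℳ : G → AddSubgroup M)

theorem mem_colon_top_of_forall_isHomogeneousElem [DirectSum.Decomposition ℳ]
    {N : Submodule R M} {r : R} (h : ∀ m, SetLike.IsHomogeneousElem ℳ m → r • m ∈ N) :
    r ∈ N.colon ⊤ := by
  refine Submodule.mem_colon.2 ?_
  rintro m -
  induction m using DirectSum.Decomposition.inductionOn ℳ with
  | zero => simp
  | homogeneous m => exact h m ⟨_, m.2⟩
  | add m m' hm hm' => simpa only [smul_add] using N.add_mem hm hm'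

theorem IsGradedIdeal.mul_mem_of_forall_isHomogeneousElem [DirectSum.Decomposition 𝒜]
    {I J : Ideal R} (hI : IsGradedIdeal 𝒜 I) {s : R}
    (h : ∀ a, SetLike.IsHomogeneousElem 𝒜 a → a ∈ I → s * a ∈ J) {a : R} (ha : a ∈ I) :
    s * a ∈ J := by
  classical
  rw [← DirectSum.sum_support_decompose 𝒜 a, Finset.mul_sum]
  exact J.sum_mem fun i _ => h _ ⟨i, (decompose 𝒜 a i).2⟩ (hI a ha i)

theorem IsGradedSPrime.isGradedSPrimeIdeal_colon [Add G] [DirectSum.Decomposition ℳ]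
    [SetLike.GradedSMul 𝒜 ℳ] {s : R} {N : Submodule R M} (h : IsGradedSPrime 𝒜 ℳ s N) :
    IsGradedSPrimeIdeal 𝒜 s (N.colon ⊤) := by
  refine ⟨h.1, fun a b ha hb hab => or_iff_not_imp_left.2 fun hsa => ?_⟩
  refine mem_colon_top_of_forall_isHomogeneousElem ℳ fun m hm => ?_
  have habm : a • b • m ∈ N := by
    rw [← mul_smul]
    exact Submodule.mem_colon.1 hab m trivial
  rw [mul_smul]
  exact (h.2 a (b • m) ha (hb.graded_smul hm) habm).resolve_left hsa

variable [AddRightCancelMonoid G] [GradedRing 𝒜] [DirectSum.Decomposition ℳ]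
    [SetLike.GradedSMul 𝒜 ℳ]

theorem coe_decompose_smul_add_of_mem (a : R) {m : M} {i j : G} (hm : m ∈ ℳ j) :
    (decompose ℳ (a • m) (i + j) : M) = (decompose 𝒜 a i : R) • m := by
  induction a using DirectSum.Decomposition.inductionOn 𝒜 with
  | zero => simp
  | @homogeneous k a =>
    have ham : (a : R) • m ∈ ℳ (k + j) := SetLike.GradedSMul.smul_mem a.2 hm
    by_cases hki : k = i
    · subst hki
      rw [decompose_of_mem_same ℳ ham, decompose_of_mem_same 𝒜 a.2]
    · rw [decompose_of_mem_ne ℳ ham (by simpa using hki), decompose_of_mem_ne 𝒜 a.2 hki,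
        zero_smul]
  | add a a' ha ha' =>
    simp only [add_smul, decompose_add, DirectSum.add_apply, AddSubgroup.coe_add, ha, ha']

theorem IsGradedSubmodule.isGradedIdeal_colon {K : Submodule R M}
    (hK : IsGradedSubmodule ℳ K) : IsGradedIdeal 𝒜 (K.colon ⊤) := by
  intro a ha i
  refine Submodule.mem_colon.2 ?_
  rintro m -
  induction m using DirectSum.Decomposition.inductionOn ℳ with
  | zero => simp
  | homogeneous m =>
    rw [← coe_decompose_smul_add_of_mem 𝒜 ℳ a m.2]
    exact hK _ (Submodule.mem_colon.1 ha _ trivial) _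
  | add m m' hm hm' => simpa only [smul_add] using K.add_mem hm hm'

theorem exists_isHomogeneousElem_mem_colon_mul_notMem_colon {K N : Submodule R M}
    (hK : IsGradedSubmodule ℳ K) (hKmul : K = K.colon ⊤ • (⊤ : Submodule R M)) {s : R} {k : M}
    (hk : k ∈ K) (hsk : s • k ∉ N) :
    ∃ a, SetLike.IsHomogeneousElem 𝒜 a ∧ a ∈ K.colon ⊤ ∧ s * a ∉ N.colon ⊤ := by
  by_contra! H
  exact hsk (Submodule.smul_mem_of_forall_mul_mem_colon
    (fun a ha => (hK.isGradedIdeal_colon 𝒜).mul_mem_of_forall_isHomogeneousElem 𝒜 H ha)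
    (hKmul ▸ hk))

end Graded

theorem stmt_4_general [AddGroup G] [DecidableEq G] [CommRing R] [AddCommGroup M] [Module R M]
    (𝒜 : G → AddSubgroup R) (ℳ : G → AddSubgroup M)
    [GradedRing 𝒜] [DirectSum.Decomposition ℳ] [SetLike.GradedSMul 𝒜 ℳ]
    (hmult : ∀ P : Submodule R M, IsGradedSubmodule ℳ P → P = P.colon ⊤ • (⊤ : Submodule R M))
    (N : Submodule R M)
    (s : R)
    (h : IsGradedSPrime 𝒜 ℳ s N)
    (K L : Submodule R M) (hK : IsGradedSubmodule ℳ K) (hL : IsGradedSubmodule ℳ L)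
    (hKL : K ⊓ L ≤ N) :
    (∀ k ∈ K, s • k ∈ N) ∨ (∀ l ∈ L, s • l ∈ N) := by
  by_contra! hcon
  obtain ⟨⟨k, hk, hsk⟩, ⟨l, hl, hsl⟩⟩ := hcon
  obtain ⟨a, ha, haK, hsa⟩ :=
    exists_isHomogeneousElem_mem_colon_mul_notMem_colon 𝒜 ℳ hK (hmult K hK) hk hsk
  obtain ⟨b, hb, hbL, hsb⟩ :=
    exists_isHomogeneousElem_mem_colon_mul_notMem_colon 𝒜 ℳ hL (hmult L hL) hl hsl
  have hab : a * b ∈ N.colon ⊤ := Submodule.mul_mem_colon_of_inf_le hKL haK hbL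
  rcases (h.isGradedSPrimeIdeal_colon 𝒜 ℳ).2 a b ha hb hab with hsa' | hsb'
  · exact hsa hsa'
  · exact hsb hsb'

/-- in a graded multiplication module, if `N` is graded `s`-prime and
`K ∩ L ⊆ N` for graded submodules `K`, `L`, then `sK ⊆ N` or `sL ⊆ N`. -/
theorem stmt_4 [AddGroup G] [DecidableEq G] [CommRing R] [AddCommGroup M] [Module R M]
    (𝒜 : G → AddSubgroup R) (ℳ : G → AddSubgroup M)
    [GradedRing 𝒜] [DirectSum.Decomposition ℳ] [SetLike.GradedSMul 𝒜 ℳ]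
    (hmult : ∀ P : Submodule R M, IsGradedSubmodule ℳ P → P = P.colon ⊤ • (⊤ : Submodule R M))
    (N : Submodule R M) (hN : IsGradedSubmodule ℳ N)
    (s : R) (hs0 : s ≠ 0) (hsh : SetLike.IsHomogeneousElem 𝒜 s)
    (h : IsGradedSPrime 𝒜 ℳ s N)
    (K L : Submodule R M) (hK : IsGradedSubmodule ℳ K) (hL : IsGradedSubmodule ℳ L)
    (hKL : K ⊓ L ≤ N) :
    (∀ k ∈ K, s • k ∈ N) ∨ (∀ l ∈ L, s • l ∈ N) :=
  stmt_4_general 𝒜 ℳ hmult N s h K L hK hL hKL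
end

section
/- Let M be a graded R-module, N a graded submodule, and s, t nonzero homogeneous elements of R with st ∉ (N :_R M). If N is graded s-prime, then (N :_M t) ⊆ (N :_M s). -/
/-! Since `N` is graded and `t` is homogeneous, `(N :_M t)` is graded, so an element `m` of it has
all its homogeneous components in it. For each homogeneous `m' ∈ (N :_M t)`, `s`-primeness with
`st ∉ (N :_R M)` forces `sm' ∈ N`, and summing the components gives `sm ∈ N`. -/

open DirectSum

variable {G R M : Type*}

theorem coe_decompose_smul_add_of_left_mem {ι A σ τ : Type*} [AddLeftCancelMonoid ι]
    [DecidableEq ι] [AddCommMonoid M] [DistribSMul A M] [SetLike σ A] [SetLike τ M]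
    [AddSubmonoidClass τ M] {𝒜 : ι → σ} (ℳ : ι → τ) [Decomposition ℳ]
    [SetLike.GradedSMul 𝒜 ℳ] {i : ι} {a : A} (ha : a ∈ 𝒜 i) (x : M) (j : ι) :
    (decompose ℳ (a • x) (i + j) : M) = a • (decompose ℳ x j : M) := by
  induction x using Decomposition.inductionOn ℳ with
  | zero => simp
  | @homogeneous k x =>
    have hax : a • (x : M) ∈ ℳ (i + k) := SetLike.GradedSMul.smul_mem ha x.2
    by_cases hkj : k = j
    · subst hkj
      rw [decompose_of_mem_same ℳ hax, decompose_of_mem_same ℳ x.2]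
    · rw [decompose_of_mem_ne ℳ hax (by simpa using hkj), decompose_of_mem_ne ℳ x.2 hkj,
        smul_zero]
  | add x y hx hy =>
    rw [smul_add, decompose_add, decompose_add, DirectSum.add_apply, DirectSum.add_apply,
      AddMemClass.coe_add, AddMemClass.coe_add, hx, hy, smul_add]

theorem mem_of_forall_decompose_mem {ι σ P : Type*} [DecidableEq ι] [AddCommMonoid M]
    [SetLike σ M] [AddSubmonoidClass σ M] (ℳ : ι → σ) [Decomposition ℳ] [SetLike P M]
    [AddSubmonoidClass P M] {p : P} {x : M} (hx : ∀ i, (decompose ℳ x i : M) ∈ p) : x ∈ p := by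
  classical
  rw [← sum_support_decompose ℳ x]
  exact sum_mem fun i _ ↦ hx i

theorem IsGradedSubmodule.comap_lsmul [AddLeftCancelMonoid G] [DecidableEq G] [CommRing R]
    [AddCommGroup M] [Module R M] {𝒜 : G → AddSubgroup R} {ℳ : G → AddSubgroup M}
    [Decomposition ℳ] [SetLike.GradedSMul 𝒜 ℳ] {N : Submodule R M}
    (hN : IsGradedSubmodule ℳ N) {t : R} (ht : SetLike.IsHomogeneousElem 𝒜 t) :
    IsGradedSubmodule ℳ (N.comap (LinearMap.lsmul R M t)) := by
  obtain ⟨i, hi⟩ := ht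
  intro x hx j
  simp only [Submodule.mem_comap, LinearMap.lsmul_apply] at hx ⊢
  rw [← coe_decompose_smul_add_of_left_mem ℳ hi]
  exact hN _ hx _

theorem IsGradedSPrime.smul_mem_of_smul_mem [CommRing R] [AddCommGroup M] [Module R M]
    {𝒜 : G → AddSubgroup R} {ℳ : G → AddSubgroup M} {s t : R} {N : Submodule R M}
    (h : IsGradedSPrime 𝒜 ℳ s N) (hst : s * t ∉ N.colon ⊤)
    (ht : SetLike.IsHomogeneousElem 𝒜 t) {m : M} (hm : SetLike.IsHomogeneousElem ℳ m)
    (htm : t • m ∈ N) : s • m ∈ N :=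
  (h.2 t m ht hm htm).resolve_left hst

theorem stmt_16_general [AddGroup G] [DecidableEq G] [CommRing R] [AddCommGroup M] [Module R M]
    (𝒜 : G → AddSubgroup R) (ℳ : G → AddSubgroup M)
    [DirectSum.Decomposition ℳ] [SetLike.GradedSMul 𝒜 ℳ]
    (N : Submodule R M) (hN : IsGradedSubmodule ℳ N)
    (s t : R)
    (hth : SetLike.IsHomogeneousElem 𝒜 t)
    (hst : s * t ∉ N.colon ⊤)
    (h : IsGradedSPrime 𝒜 ℳ s N) :
    N.comap (LinearMap.lsmul R M t) ≤ N.comap (LinearMap.lsmul R M s) := by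
  intro m hm
  have hcolon := hN.comap_lsmul hth
  refine mem_of_forall_decompose_mem ℳ fun g ↦ ?_
  exact h.smul_mem_of_smul_mem hst hth ⟨g, (decompose ℳ m g).2⟩ (hcolon m hm g)

/-- if `st ∉ (N :_R M)` and `N` is graded `s`-prime, then
`(N :_M t) ⊆ (N :_M s)`. -/
theorem stmt_16 [AddGroup G] [DecidableEq G] [CommRing R] [AddCommGroup M] [Module R M]
    (𝒜 : G → AddSubgroup R) (ℳ : G → AddSubgroup M)
    [GradedRing 𝒜] [DirectSum.Decomposition ℳ] [SetLike.GradedSMul 𝒜 ℳ]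
    (N : Submodule R M) (hN : IsGradedSubmodule ℳ N)
    (s t : R) (hs0 : s ≠ 0) (ht0 : t ≠ 0)
    (hsh : SetLike.IsHomogeneousElem 𝒜 s) (hth : SetLike.IsHomogeneousElem 𝒜 t)
    (hst : s * t ∉ N.colon ⊤)
    (h : IsGradedSPrime 𝒜 ℳ s N) :
    N.comap (LinearMap.lsmul R M t) ≤ N.comap (LinearMap.lsmul R M s) :=
  stmt_16_general 𝒜 ℳ N hN s t hth hst h
end
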